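/- arXiv:2409.10476 — 2 statements merged into one kernel-verified Lean document; each statement's English description precedes it below -/
import Mathlib

section
/- With the setup of the one-step DDIM inversion/generation (α₀, α₁ > 0, ε_C, ε_∅ ∈ ℝⁿ, ε'(w) = w·ε_C + (1−w)·ε_∅, z₁ defined from z₀ via scale w_i and z₀' defined from z₁ via scale w_g), the reconstruction error satisfies ‖z₀ − z₀'‖ = √α₀ · |√(1/α₁ − 1) − √(1/α₀ − 1)| · |w_g − w_i| · ‖ε_C − ε_∅‖. -/
/-! The inversion step and the generation step are the same DDIM update run in opposite
directions, so their latent parts cancel exactly and only the two noise terms survive, with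
opposite coefficients `±√α₀ Δ`, where `Δ = √(1/α₁ − 1) − √(1/α₀ − 1)`. By linearity of
classifier-free guidance, the difference of the guided noises at scales `w_g` and `w_i` is
`(w_g − w_i) • (ε_C − ε_∅)`. -/

open Real

section DDIM

variable {E : Type*} [AddCommGroup E] [Module ℝ E]

/-- The deterministic DDIM update between timesteps with cumulative signal levels `a` and `b`
(the paper's `α`). -/
noncomputable def ddimStep (a b : ℝ) (z ε : E) : E :=
  √(b / a) • z + (√b * (√(1 / b - 1) - √(1 / a - 1))) • ε

lemma sqrt_div_mul_sqrt_div_swap {a b : ℝ} (ha : 0 < a) (hb : 0 < b) :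
    √(a / b) * √(b / a) = 1 := by
  rw [← sqrt_mul (div_nonneg ha.le hb.le), div_mul_div_cancel₀ hb.ne', div_self ha.ne', sqrt_one]

lemma sqrt_div_mul_sqrt {a b : ℝ} (hb : 0 < b) : √(a / b) * √b = √a := by
  rw [sqrt_div' a hb.le, div_mul_cancel₀ _ (sqrt_pos.mpr hb).ne']

lemma sub_ddimStep_ddimStep {a b : ℝ} (ha : 0 < a) (hb : 0 < b) (z ε η : E) :
    z - ddimStep b a (ddimStep a b z ε) η =
      (√a * (√(1 / b - 1) - √(1 / a - 1))) • (η - ε) := by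
  simp only [ddimStep, smul_add, smul_smul, sqrt_div_mul_sqrt_div_swap ha hb, one_smul,
    ← mul_assoc, sqrt_div_mul_sqrt hb]
  module

lemma guided_sub_guided (w v : ℝ) (x y : E) :
    (w • x + (1 - w) • y) - (v • x + (1 - v) • y) = (w - v) • (x - y) := by
  module

end DDIM

/-- Quantitative Proposition 2: the one-step reconstruction error equals
√α₀ · |√(1/α₁ − 1) − √(1/α₀ − 1)| · |w_g − w_i| · ‖ε_C − ε_∅‖. -/
theorem stmt_8 {n : ℕ} (α₀ α₁ : ℝ) (hα₀ : 0 < α₀) (hα₁ : 0 < α₁)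
    (εC εE z₀ : EuclideanSpace ℝ (Fin n)) (wi wg : ℝ)
    (ε' : ℝ → EuclideanSpace ℝ (Fin n))
    (hε' : ∀ w, ε' w = w • εC + (1 - w) • εE)
    (z₁ : EuclideanSpace ℝ (Fin n))
    (hz₁ : z₁ = Real.sqrt (α₁ / α₀) • z₀ +
      (Real.sqrt α₁ * (Real.sqrt (1 / α₁ - 1) - Real.sqrt (1 / α₀ - 1))) • ε' wi)
    (z₀' : EuclideanSpace ℝ (Fin n))
    (hz₀' : z₀' = Real.sqrt (α₀ / α₁) • z₁ +
      (Real.sqrt α₀ * (Real.sqrt (1 / α₀ - 1) - Real.sqrt (1 / α₁ - 1))) • ε' wg) :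
    ‖z₀ - z₀'‖ = Real.sqrt α₀ * |Real.sqrt (1 / α₁ - 1) - Real.sqrt (1 / α₀ - 1)| *
      |wg - wi| * ‖εC - εE‖ := by
  have hround : z₀ - z₀' =
      (√α₀ * (√(1 / α₁ - 1) - √(1 / α₀ - 1))) • (ε' wg - ε' wi) := by
    rw [hz₀', hz₁]
    exact sub_ddimStep_ddimStep hα₀ hα₁ z₀ (ε' wi) (ε' wg)
  rw [hround, hε', hε', guided_sub_guided, smul_smul, norm_smul, Real.norm_eq_abs, abs_mul,
    abs_mul, abs_of_nonneg (sqrt_nonneg _)]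
end

section
/- Let x_c, x_∅ ∈ ℝⁿ with ⟨x_c, x_∅⟩ = 0 and x_c ≠ x_∅. Then at the optimal scale w* = ‖x_∅‖²/(‖x_c‖² + ‖x_∅‖²), the minimum error is δ(w*) = ‖x_c‖·‖x_∅‖ / √(‖x_c‖² + ‖x_∅‖²), which is at most min(‖x_c‖, ‖x_∅‖) = min(δ(1), δ(0)). -/
/-- Under orthogonality, the minimal error δ(w*) = ‖x_c‖‖x_∅‖/√(‖x_c‖²+‖x_∅‖²)
at w* = ‖x_∅‖²/(‖x_c‖²+‖x_∅‖²), and it is at most min(‖x_c‖,‖x_∅‖) = min(δ(1), δ(0)). -/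
theorem stmt_9 {n : ℕ} (xc xe : EuclideanSpace ℝ (Fin n)) (hne : xc ≠ xe)
    (horth : (inner ℝ xc xe : ℝ) = 0) :
    ‖(‖xe‖ ^ 2 / (‖xc‖ ^ 2 + ‖xe‖ ^ 2)) • xc +
        (1 - ‖xe‖ ^ 2 / (‖xc‖ ^ 2 + ‖xe‖ ^ 2)) • xe‖
      = ‖xc‖ * ‖xe‖ / Real.sqrt (‖xc‖ ^ 2 + ‖xe‖ ^ 2) ∧
    ‖xc‖ * ‖xe‖ / Real.sqrt (‖xc‖ ^ 2 + ‖xe‖ ^ 2) ≤ min ‖xc‖ ‖xe‖ ∧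
    min ‖xc‖ ‖xe‖ =
      min ‖(1 : ℝ) • xc + (1 - (1 : ℝ)) • xe‖ ‖(0 : ℝ) • xc + (1 - (0 : ℝ)) • xe‖ := by
  set a := ‖xc‖ with ha
  set b := ‖xe‖ with hb
  have hs : 0 < a ^ 2 + b ^ 2 := by
    rcases eq_or_ne xc 0 with h | h
    · have : xe ≠ 0 := by rintro rfl; exact hne (by rw [h])
      have : 0 < b := by simpa [hb] using norm_pos_iff.mpr this
      positivity
    · have : 0 < a := by simpa [ha] using norm_pos_iff.mpr h
      positivity
  have hsq : 0 < Real.sqrt (a ^ 2 + b ^ 2) := Real.sqrt_pos.mpr hs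
  have key : ∀ u v : ℝ, ‖u • xc + v • xe‖ = Real.sqrt (u ^ 2 * a ^ 2 + v ^ 2 * b ^ 2) := by
    intro u v
    rw [← Real.sqrt_sq (norm_nonneg (u • xc + v • xe)), norm_add_sq_real]
    congr 1
    rw [real_inner_smul_left, real_inner_smul_right, horth, norm_smul, norm_smul]
    simp only [Real.norm_eq_abs]
    ring_nf
    rw [sq_abs, sq_abs]
  refine ⟨?_, ?_, ?_⟩
  · rw [key]
    have harg : (b ^ 2 / (a ^ 2 + b ^ 2)) ^ 2 * a ^ 2 +
        (1 - b ^ 2 / (a ^ 2 + b ^ 2)) ^ 2 * b ^ 2 = (a * b / Real.sqrt (a ^ 2 + b ^ 2)) ^ 2 := by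
      rw [div_pow, div_pow, Real.sq_sqrt hs.le]
      field_simp
      ring
    rw [harg, Real.sqrt_sq (by positivity)]
  · have hab : 0 ≤ a := norm_nonneg _
    have hbb : 0 ≤ b := norm_nonneg _
    have h1 : a * b / Real.sqrt (a ^ 2 + b ^ 2) ≤ a := by
      rw [div_le_iff₀ hsq]
      have : b ≤ Real.sqrt (a ^ 2 + b ^ 2) := by
        nlinarith [Real.sq_sqrt hs.le, hsq.le, sq_nonneg (Real.sqrt (a ^ 2 + b ^ 2) - b)]
      nlinarith
    have h2 : a * b / Real.sqrt (a ^ 2 + b ^ 2) ≤ b := by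
      rw [div_le_iff₀ hsq]
      have : a ≤ Real.sqrt (a ^ 2 + b ^ 2) := by
        nlinarith [Real.sq_sqrt hs.le, hsq.le, sq_nonneg (Real.sqrt (a ^ 2 + b ^ 2) - a)]
      nlinarith
    exact le_min h1 h2
  · simp [ha, hb]
end
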